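/- Fix $c > 1$ and define $G(u,v;c) = 4c\, g(u,v;c) g(v,u;c) g(1-u,1-v;c) g(1-v,1-u;c)$ where $g(x,y;c) = \left(\frac{2cx+(y-x)-\sqrt{(y-x)^2+4cxy}}{x(c-1)}\right)^{-x}$. Then $G(u,v;c)$ is strictly increasing in $u$ and strictly decreasing in $v$ on the region $0 < u < v < 1$. In particular, for $u \ne v$ in $(0,1)$, $G(u,v;c) < (\sqrt{c}+1)^2$. -/

import Mathlib

noncomputable def gLD (x y c : ℝ) : ℝ :=
  ((2 * c * x + (y - x) - Real.sqrt ((y - x) ^ 2 + 4 * c * x * y)) / (x * (c - 1))) ^ (-x)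

noncomputable def GLD (u v c : ℝ) : ℝ :=
  4 * c * gLD u v c * gLD v u c * gLD (1 - u) (1 - v) c * gLD (1 - v) (1 - u) c

/-
Rationalizing its base, `gLD x y c = (ψ (y / x) / (4 * c)) ^ x` with
`ψ t = gLDDenom c t = 2c + t - 1 + √((t - 1)² + 4ct)`,
and `(log ψ)' = 1 / √((t - 1)² + 4ct)`.
Hence the potential `Φ(x, y) = x log ψ(y/x) + y log ψ(x/y)` satisfies `∂ₓΦ = log ψ(y/x)`,
and `log G(u, v) = Φ(u, v) + Φ(1 - u, 1 - v) - log 4c` has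
`∂ᵤ log G = log ψ(v/u) - log ψ((1 - v)/(1 - u))`, which has the sign of `v - u` since `ψ` is
increasing. The symmetries `G(u, v) = G(v, u) = G(1 - u, 1 - v)` reduce everything to the
decrease of `G` in its first argument beyond the diagonal,
where `G(u, u) = ψ(1)² / 4c = (√c + 1)²`.
-/

open Real Set

theorem hasDerivAt_mul_comp_div_add_mul_comp_div {f f' : ℝ → ℝ} {x y : ℝ}
    (hf : ∀ t, 0 < t → HasDerivAt f (f' t) t) (hf' : ∀ t, 0 < t → f' t⁻¹ = t * f' t)
    (hx : 0 < x) (hy : 0 < y) :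
    HasDerivAt (fun x => x * f (y / x) + y * f (x / y)) (f (y / x)) x := by
  have hyx : HasDerivAt (fun x => y / x) (-(y / x ^ 2)) x := by
    simpa [div_eq_mul_inv] using (hasDerivAt_inv hx.ne').const_mul y
  have h₁ := (hasDerivAt_id x).mul ((hf (y / x) (by positivity)).comp x hyx)
  have h₂ := ((hf (x / y) (by positivity)).comp x ((hasDerivAt_id x).div_const y)).const_mul y
  refine (h₁.add h₂).congr_deriv ?_
  rw [show x / y = (y / x)⁻¹ by rw [inv_div], hf' _ (by positivity)]
  simp only [Function.comp_def, id_eq]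
  field_simp
  ring

section

variable {c t x y u v : ℝ}

noncomputable def gLDDenom (c t : ℝ) : ℝ := 2 * c + (t - 1) + √((t - 1) ^ 2 + 4 * c * t)

theorem gLDDenom_pos (hc : 0 < c) (ht : 0 < t) : 0 < gLDDenom c t := by
  have habs : |t - 1| ≤ √((t - 1) ^ 2 + 4 * c * t) := Real.abs_le_sqrt (by nlinarith)
  have hneg := neg_abs_le (t - 1)
  unfold gLDDenom
  linarith

theorem hasDerivAt_log_gLDDenom (hc : 0 < c) (ht : 0 < t) :
    HasDerivAt (fun t => log (gLDDenom c t)) (√((t - 1) ^ 2 + 4 * c * t))⁻¹ t := by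
  have hdisc : 0 < (t - 1) ^ 2 + 4 * c * t := by positivity
  have hq : HasDerivAt (fun t => (t - 1) ^ 2 + 4 * c * t) (2 * (t - 1) + 4 * c) t := by
    refine ((((hasDerivAt_id t).sub_const 1).pow 2).add
      ((hasDerivAt_id t).const_mul (4 * c))).congr_deriv ?_
    simp only [id_eq]
    ring
  have hψ : HasDerivAt (gLDDenom c)
      (1 + (2 * (t - 1) + 4 * c) / (2 * √((t - 1) ^ 2 + 4 * c * t))) t :=
    (((hasDerivAt_id t).sub_const 1).const_add (2 * c)).add (hq.sqrt hdisc.ne')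
  convert hψ.log (gLDDenom_pos hc ht).ne' using 1
  have hψ₀ := (gLDDenom_pos hc ht).ne'
  unfold gLDDenom at hψ₀ ⊢
  generalize hs : √((t - 1) ^ 2 + 4 * c * t) = s at hψ₀ ⊢
  have : s ≠ 0 := hs ▸ (Real.sqrt_pos.2 hdisc).ne'
  field_simp
  ring

theorem strictMonoOn_log_gLDDenom (hc : 0 < c) :
    StrictMonoOn (fun t => log (gLDDenom c t)) (Ioi 0) := by
  refine strictMonoOn_of_hasDerivWithinAt_pos (convex_Ioi 0)
    (f' := fun t => (√((t - 1) ^ 2 + 4 * c * t))⁻¹)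
    (fun t ht => (hasDerivAt_log_gLDDenom hc ht).continuousAt.continuousWithinAt)
    (fun t ht => ?_) (fun t ht => ?_)
  · rw [interior_Ioi] at ht
    exact (hasDerivAt_log_gLDDenom hc ht).hasDerivWithinAt
  · rw [interior_Ioi, mem_Ioi] at ht
    exact inv_pos.2 (Real.sqrt_pos.2 (by positivity))

noncomputable def gLDPotential (c x y : ℝ) : ℝ :=
  x * log (gLDDenom c (y / x)) + y * log (gLDDenom c (x / y))

/-- The cross terms cancel because `t * (log ∘ gLDDenom c)' t = (log ∘ gLDDenom c)' t⁻¹`. -/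
theorem hasDerivAt_gLDPotential (hc : 0 < c) (hx : 0 < x) (hy : 0 < y) :
    HasDerivAt (fun x => gLDPotential c x y) (log (gLDDenom c (y / x))) x := by
  refine hasDerivAt_mul_comp_div_add_mul_comp_div (fun t ht => hasDerivAt_log_gLDDenom hc ht)
    (fun t ht => ?_) hx hy
  have hdisc_inv : (t⁻¹ - 1) ^ 2 + 4 * c * t⁻¹ = ((t - 1) ^ 2 + 4 * c * t) / t ^ 2 := by
    field_simp
    ring
  rw [hdisc_inv, Real.sqrt_div' _ (sq_nonneg t), Real.sqrt_sq ht.le, inv_div, div_eq_mul_inv]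

theorem gLD_eq_exp (hc : 0 < c) (hc₁ : c ≠ 1) (hx : 0 < x) (hy : 0 < y) :
    gLD x y c = exp (x * (log (gLDDenom c (y / x)) - log (4 * c))) := by
  obtain ⟨t, ht, rfl⟩ : ∃ t, 0 < t ∧ y = t * x := ⟨y / x, div_pos hy hx, by field_simp⟩
  rw [mul_div_cancel_right₀ t hx.ne']
  have hψ := gLDDenom_pos hc ht
  have hs := Real.sq_sqrt (show 0 ≤ (t - 1) ^ 2 + 4 * c * t by positivity)
  have hsqrt : √((t * x - x) ^ 2 + 4 * c * x * (t * x)) = x * √((t - 1) ^ 2 + 4 * c * t) := by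
    rw [show (t * x - x) ^ 2 + 4 * c * x * (t * x) = x ^ 2 * ((t - 1) ^ 2 + 4 * c * t) by ring,
      Real.sqrt_mul (sq_nonneg x), Real.sqrt_sq hx.le]
  have hbase :
      (2 * c * x + (t * x - x) - √((t * x - x) ^ 2 + 4 * c * x * (t * x))) / (x * (c - 1))
        = 4 * c / gLDDenom c t := by
    rw [hsqrt, div_eq_div_iff (mul_ne_zero hx.ne' (sub_ne_zero.2 hc₁)) hψ.ne', gLDDenom]
    linear_combination (-x) * hs
  rw [gLD, hbase, rpow_def_of_pos (div_pos (by positivity) hψ), log_div (by positivity) hψ.ne']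
  ring_nf

noncomputable def logGLD (c u v : ℝ) : ℝ :=
  gLDPotential c u v + gLDPotential c (1 - u) (1 - v) - log (4 * c)

theorem GLD_eq_exp_logGLD (hc : 0 < c) (hc₁ : c ≠ 1) (hu : u ∈ Ioo 0 1) (hv : v ∈ Ioo 0 1) :
    GLD u v c = exp (logGLD c u v) := by
  obtain ⟨hu₀, hu₁⟩ := hu
  obtain ⟨hv₀, hv₁⟩ := hv
  rw [GLD, gLD_eq_exp hc hc₁ hu₀ hv₀, gLD_eq_exp hc hc₁ hv₀ hu₀,
    gLD_eq_exp hc hc₁ (sub_pos.2 hu₁) (sub_pos.2 hv₁),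
    gLD_eq_exp hc hc₁ (sub_pos.2 hv₁) (sub_pos.2 hu₁)]
  nth_rw 1 [← exp_log (show 0 < 4 * c by positivity)]
  simp only [← exp_add, logGLD, gLDPotential]
  ring_nf

theorem hasDerivAt_logGLD (hc : 0 < c) (hx : x ∈ Ioo 0 1) (hy : y ∈ Ioo 0 1) :
    HasDerivAt (fun x => logGLD c x y)
      (log (gLDDenom c (y / x)) - log (gLDDenom c ((1 - y) / (1 - x)))) x := by
  have h₁ := hasDerivAt_gLDPotential hc hx.1 hy.1
  have h₂ := (hasDerivAt_gLDPotential hc (sub_pos.2 hx.2) (sub_pos.2 hy.2)).comp x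
    ((hasDerivAt_id x).const_sub 1)
  refine ((h₁.add h₂).sub_const (log (4 * c))).congr_deriv ?_
  ring

theorem strictAntiOn_logGLD (hc : 0 < c) (hy : 0 < y) :
    StrictAntiOn (fun x => logGLD c x y) (Ico y 1) := by
  have mem : ∀ x ∈ Ico y 1, x ∈ Ioo 0 1 ∧ y ∈ Ioo 0 1 := fun x ⟨hyx, hx₁⟩ =>
    ⟨⟨hy.trans_le hyx, hx₁⟩, ⟨hy, hyx.trans_lt hx₁⟩⟩
  refine strictAntiOn_of_hasDerivWithinAt_neg (convex_Ico y 1)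
    (f' := fun x => log (gLDDenom c (y / x)) - log (gLDDenom c ((1 - y) / (1 - x))))
    (fun x hx =>
      (hasDerivAt_logGLD hc (mem x hx).1 (mem x hx).2).continuousAt.continuousWithinAt)
    (fun x hx => ?_) (fun x hx => ?_)
  all_goals
    rw [interior_Ico] at hx
    obtain ⟨hx', hy'⟩ := mem x (Ioo_subset_Ico_self hx)
  · exact (hasDerivAt_logGLD hc hx' hy').hasDerivWithinAt
  · have hratio : y / x < (1 - y) / (1 - x) := by
      rw [div_lt_div_iff₀ hx'.1 (sub_pos.2 hx'.2)]
      nlinarith [hx.1]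
    exact sub_neg.2 (strictMonoOn_log_gLDDenom hc (div_pos hy hx'.1)
      (div_pos (sub_pos.2 hy'.2) (sub_pos.2 hx'.2)) hratio)

theorem strictAntiOn_GLD (hc : 0 < c) (hc₁ : c ≠ 1) (hy : 0 < y) :
    StrictAntiOn (fun x => GLD x y c) (Ico y 1) := by
  intro a ha b hb hab
  have hy' : y ∈ Ioo 0 1 := ⟨hy, ha.1.trans_lt ha.2⟩
  dsimp only
  rw [GLD_eq_exp_logGLD hc hc₁ ⟨hy.trans_le ha.1, ha.2⟩ hy',
    GLD_eq_exp_logGLD hc hc₁ ⟨hy.trans_le hb.1, hb.2⟩ hy']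
  exact exp_lt_exp.2 (strictAntiOn_logGLD hc hy ha hb hab)

theorem gLDDenom_one (hc : 0 ≤ c) : gLDDenom c 1 = 2 * √c * (√c + 1) := by
  have hsc := Real.sq_sqrt hc
  rw [gLDDenom,
    show (1 - 1 : ℝ) ^ 2 + 4 * c * 1 = (2 * √c) ^ 2 by linear_combination (-4) * hsc,
    Real.sqrt_sq (by positivity)]
  linear_combination (-2) * hsc

theorem GLD_self (hc : 0 < c) (hc₁ : c ≠ 1) (hu : u ∈ Ioo 0 1) :
    GLD u u c = (√c + 1) ^ 2 := by
  have hlog : logGLD c u u = log (gLDDenom c 1 ^ 2) - log (4 * c) := by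
    rw [logGLD, gLDPotential, gLDPotential, div_self hu.1.ne', div_self (sub_pos.2 hu.2).ne',
      log_pow]
    ring
  have hsc := Real.sq_sqrt hc.le
  rw [GLD_eq_exp_logGLD hc hc₁ hu hu, hlog, exp_sub,
    exp_log (pow_pos (gLDDenom_pos hc one_pos) 2), exp_log (by positivity), gLDDenom_one hc.le,
    div_eq_iff (by positivity)]
  linear_combination 4 * (√c + 1) ^ 2 * hsc

theorem GLD_comm (u v c : ℝ) : GLD u v c = GLD v u c := by
  unfold GLD
  ring

theorem GLD_one_sub_one_sub (u v c : ℝ) : GLD (1 - u) (1 - v) c = GLD u v c := by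
  unfold GLD
  simp only [sub_sub_cancel]
  ring

end

theorem GLD_monotone (c : ℝ) (hc : 1 < c) :
    (∀ u₁ u₂ v : ℝ, 0 < u₁ → u₁ < u₂ → u₂ < v → v < 1 → GLD u₁ v c < GLD u₂ v c) ∧
    (∀ u v₁ v₂ : ℝ, 0 < u → u < v₁ → v₁ < v₂ → v₂ < 1 → GLD u v₂ c < GLD u v₁ c) ∧
    (∀ u v : ℝ, u ∈ Set.Ioo (0:ℝ) 1 → v ∈ Set.Ioo (0:ℝ) 1 → u ≠ v →
      GLD u v c < (Real.sqrt c + 1) ^ 2) := by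
  have hc₀ : 0 < c := one_pos.trans hc
  have anti : ∀ {x₁ x₂ y : ℝ}, 0 < y → y ≤ x₁ → x₁ < x₂ → x₂ < 1 → GLD x₂ y c < GLD x₁ y c :=
    fun hy hyx₁ hx₁₂ hx₂ =>
      strictAntiOn_GLD hc₀ hc.ne' hy ⟨hyx₁, hx₁₂.trans hx₂⟩ ⟨hyx₁.trans hx₁₂.le, hx₂⟩ hx₁₂
  refine ⟨fun u₁ u₂ v hu₁ hu₁₂ hu₂v hv => ?_, fun u v₁ v₂ hu huv₁ hv₁₂ hv₂ => ?_,
    fun u v hu hv huv => ?_⟩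
  · rw [← GLD_one_sub_one_sub u₁, ← GLD_one_sub_one_sub u₂]
    exact anti (by linarith) (by linarith) (by linarith) (by linarith)
  · rw [GLD_comm u, GLD_comm u]
    exact anti hu huv₁.le hv₁₂ hv₂
  · rcases huv.lt_or_gt with h | h
    · rw [GLD_comm, ← GLD_self hc₀ hc.ne' hu]
      exact anti hu.1 le_rfl h hv.2
    · rw [← GLD_self hc₀ hc.ne' hv]
      exact anti hv.1 le_rfl h hu.2
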